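/- Let h : X → Y be a regular epimorphism of crossed modules, let p : Q → Y be a morphism of crossed modules, and let W = X ×_Y Q be the pullback, computed componentwise with componentwise action. Let M be a crossed module and ev : M → Q a morphism such that p ∘ ev is trivial, and let ψ : M → W be the morphism with components m ↦ (1, evᵢ(m)) for i = 1, 2. Then the normal closure K_W of the image of ψ in W equals {1} × K_Q, where K_Q is the normal closure of the image of ev in Q; in particular K_W and K_Q are isomorphic crossed modules. -/

import Mathlib

set_option linter.unusedVariables false

/-- A crossed module of groups `(M, G, d)` with `G` acting on `M`. -/
structure XMod : Type 1 where
  M : Type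
  G : Type
  [grpM : Group M]
  [grpG : Group G]
  act : G →* MulAut M
  d : M →* G
  act_d : ∀ (b : G) (t : M), d (act b t) = b * d t * b⁻¹
  peiffer : ∀ (t s : M), act (d t) s = t * s * t⁻¹

attribute [instance] XMod.grpM XMod.grpG

/-- A morphism of crossed modules. -/
structure XModHom (N T : XMod) where
  f1 : N.M →* T.M
  f2 : N.G →* T.G
  comm_d : ∀ n, T.d (f1 n) = f2 (N.d n)
  equiv : ∀ (b : N.G) (n : N.M), f1 (N.act b n) = T.act (f2 b) (f1 n)

namespace XModHom

theorem ext {N T : XMod} {f g : XModHom N T} (h1 : f.f1 = g.f1) (h2 : f.f2 = g.f2) :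
    f = g := by
  cases f; cases g; cases h1; cases h2; rfl

/-- The identity morphism. -/
def id (T : XMod) : XModHom T T :=
  ⟨MonoidHom.id _, MonoidHom.id _, fun _ => rfl, fun _ _ => rfl⟩

/-- Composition of morphisms of crossed modules. -/
def comp {A B C : XMod} (g : XModHom B C) (f : XModHom A B) : XModHom A C where
  f1 := g.f1.comp f.f1
  f2 := g.f2.comp f.f2
  comm_d := by intro n; simp [MonoidHom.comp_apply, g.comm_d, f.comm_d]
  equiv := by intro b n; simp [MonoidHom.comp_apply, f.equiv, g.equiv]

/-- The trivial morphism of crossed modules. -/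
def triv (A B : XMod) : XModHom A B where
  f1 := 1
  f2 := 1
  comm_d := by intro n; simp
  equiv := by intro b n; simp

/-- A morphism of crossed modules is an isomorphism if it has a two-sided inverse. -/
def IsIso {A B : XMod} (f : XModHom A B) : Prop :=
  ∃ g : XModHom B A, comp g f = id A ∧ comp f g = id B

/-- Regular epimorphisms of crossed modules are exactly the componentwise
surjective morphisms. -/
def RegEpi {A B : XMod} (f : XModHom A B) : Prop :=
  Function.Surjective f.f1 ∧ Function.Surjective f.f2

/-- `κ` is a kernel of `α` (in the categorical sense). -/
def IsKernelOf {N T Q : XMod} (κ : XModHom N T) (α : XModHom T Q) : Prop :=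
  comp α κ = triv N Q ∧
    ∀ (X : XMod) (u : XModHom X T), comp α u = triv X Q →
      ∃! v : XModHom X N, comp κ v = u

end XModHom

/-- `1 → N → T → Q → 1` is a short exact sequence of crossed modules. -/
def ShortExact {N T Q : XMod} (κ : XModHom N T) (α : XModHom T Q) : Prop :=
  XModHom.IsKernelOf κ α ∧ XModHom.RegEpi α
/-- A localization functor (coaugmented idempotent functor) on `XMod`. -/
structure LocalizationFunctor where
  obj : XMod → XMod
  map : ∀ {A B : XMod}, XModHom A B → XModHom (obj A) (obj B)
  map_id : ∀ A : XMod, map (XModHom.id A) = XModHom.id (obj A)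
  map_comp : ∀ {A B C : XMod} (f : XModHom A B) (g : XModHom B C),
    map (XModHom.comp g f) = XModHom.comp (map g) (map f)
  ell : ∀ A : XMod, XModHom A (obj A)
  natural : ∀ {A B : XMod} (f : XModHom A B),
    XModHom.comp (ell B) f = XModHom.comp (map f) (ell A)
  iso_ell_obj : ∀ A : XMod, XModHom.IsIso (ell (obj A))
  iso_map_ell : ∀ A : XMod, XModHom.IsIso (map (ell A))

namespace LocalizationFunctor

/-- A crossed module is `L`-local if its coaugmentation is an isomorphism. -/
def IsLocal (L : LocalizationFunctor) (X : XMod) : Prop :=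
  XModHom.IsIso (L.ell X)

/-- `L` is a regular-epi localization if every coaugmentation morphism is a
regular epimorphism. -/
def RegEpiLoc (L : LocalizationFunctor) : Prop :=
  ∀ X : XMod, XModHom.RegEpi (L.ell X)

/-- A short exact sequence is `L`-flat if applying `L` yields a short exact sequence. -/
def LFlat (L : LocalizationFunctor) {N T Q : XMod} (κ : XModHom N T) (α : XModHom T Q) : Prop :=
  ShortExact (L.map κ) (L.map α)

end LocalizationFunctor
section Pullback

variable {T Q Q' : XMod} (α : XModHom T Q) (g : XModHom Q' Q)

/-- Level-1 part of the pullback `T ×_Q Q'`, computed componentwise. -/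
def pbM : Subgroup (T.M × Q'.M) where
  carrier := {p | α.f1 p.1 = g.f1 p.2}
  one_mem' := by simp
  mul_mem' := by
    intro a b ha hb
    simp only [Set.mem_setOf_eq, Prod.fst_mul, Prod.snd_mul, map_mul] at *
    rw [ha, hb]
  inv_mem' := by
    intro a ha
    simp only [Set.mem_setOf_eq, Prod.fst_inv, Prod.snd_inv, map_inv] at *
    rw [ha]

/-- Level-2 part of the pullback `T ×_Q Q'`, computed componentwise. -/
def pbG : Subgroup (T.G × Q'.G) where
  carrier := {p | α.f2 p.1 = g.f2 p.2}
  one_mem' := by simp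
  mul_mem' := by
    intro a b ha hb
    simp only [Set.mem_setOf_eq, Prod.fst_mul, Prod.snd_mul, map_mul] at *
    rw [ha, hb]
  inv_mem' := by
    intro a ha
    simp only [Set.mem_setOf_eq, Prod.fst_inv, Prod.snd_inv, map_inv] at *
    rw [ha]

theorem mem_pbM_iff (p : T.M × Q'.M) : p ∈ pbM α g ↔ α.f1 p.1 = g.f1 p.2 := Iff.rfl

theorem mem_pbG_iff (p : T.G × Q'.G) : p ∈ pbG α g ↔ α.f2 p.1 = g.f2 p.2 := Iff.rfl

theorem pb_act_mem {b : T.G × Q'.G} (hb : b ∈ pbG α g) {p : T.M × Q'.M}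
    (hp : p ∈ pbM α g) : (T.act b.1 p.1, Q'.act b.2 p.2) ∈ pbM α g := by
  have hb' : α.f2 b.1 = g.f2 b.2 := hb
  have hp' : α.f1 p.1 = g.f1 p.2 := hp
  show α.f1 (T.act b.1 p.1) = g.f1 (Q'.act b.2 p.2)
  rw [α.equiv, g.equiv, hb', hp']

theorem XMod.act_inv_act (X : XMod) (b : X.G) (t : X.M) :
    X.act b⁻¹ (X.act b t) = t := by
  rw [← MulAut.mul_apply, ← map_mul, inv_mul_cancel, map_one, MulAut.one_apply]

theorem XMod.act_act_inv (X : XMod) (b : X.G) (t : X.M) :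
    X.act b (X.act b⁻¹ t) = t := by
  rw [← MulAut.mul_apply, ← map_mul, mul_inv_cancel, map_one, MulAut.one_apply]

/-- The action of an element of the pullback on the level-1 part, as a group
automorphism. -/
def pbActEquiv (b : ↥(pbG α g)) : ↥(pbM α g) ≃* ↥(pbM α g) where
  toFun p := ⟨(T.act b.1.1 p.1.1, Q'.act b.1.2 p.1.2), pb_act_mem α g b.2 p.2⟩
  invFun p := ⟨(T.act b.1.1⁻¹ p.1.1, Q'.act b.1.2⁻¹ p.1.2),
    pb_act_mem α g ((pbG α g).inv_mem b.2) p.2⟩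
  left_inv p := by
    apply Subtype.ext
    exact Prod.ext (T.act_inv_act _ _) (Q'.act_inv_act _ _)
  right_inv p := by
    apply Subtype.ext
    exact Prod.ext (T.act_act_inv _ _) (Q'.act_act_inv _ _)
  map_mul' p q := by
    apply Subtype.ext
    exact Prod.ext (map_mul _ _ _) (map_mul _ _ _)

/-- The pullback `T ×_Q Q'` of `α : T → Q` along `g : Q' → Q`, computed
componentwise. -/
def pbXMod : XMod where
  M := ↥(pbM α g)
  G := ↥(pbG α g)
  act :=
    { toFun := pbActEquiv α g
      map_one' := by
        apply MulEquiv.ext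
        intro p
        apply Subtype.ext
        apply Prod.ext
        · show T.act (1 : ↥(pbG α g)).1.1 p.1.1 = p.1.1
          simp
        · show Q'.act (1 : ↥(pbG α g)).1.2 p.1.2 = p.1.2
          simp
      map_mul' := by
        intro b c
        apply MulEquiv.ext
        intro p
        apply Subtype.ext
        apply Prod.ext
        · show T.act (b * c).1.1 p.1.1 = T.act b.1.1 (T.act c.1.1 p.1.1)
          simp [map_mul]
        · show Q'.act (b * c).1.2 p.1.2 = Q'.act b.1.2 (Q'.act c.1.2 p.1.2)
          simp [map_mul] }
  d :=
    { toFun := fun p => ⟨(T.d p.1.1, Q'.d p.1.2), by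
        have hp : α.f1 p.1.1 = g.f1 p.1.2 := p.2
        show α.f2 (T.d p.1.1) = g.f2 (Q'.d p.1.2)
        rw [← α.comm_d, ← g.comm_d, hp]⟩
      map_one' := by
        apply Subtype.ext
        apply Prod.ext <;> simp
      map_mul' := by
        intro p q
        apply Subtype.ext
        apply Prod.ext <;> simp }
  act_d := by
    intro b p
    apply Subtype.ext
    apply Prod.ext
    · exact T.act_d _ _
    · exact Q'.act_d _ _
  peiffer := by
    intro p q
    apply Subtype.ext
    apply Prod.ext
    · exact T.peiffer _ _
    · exact Q'.peiffer _ _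

/-- First projection of the pullback. -/
def pbFst : XModHom (pbXMod α g) T where
  f1 := (MonoidHom.fst T.M Q'.M).comp (pbM α g).subtype
  f2 := (MonoidHom.fst T.G Q'.G).comp (pbG α g).subtype
  comm_d := fun _ => rfl
  equiv := fun _ _ => rfl

/-- Second projection of the pullback. -/
def pbSnd : XModHom (pbXMod α g) Q' where
  f1 := (MonoidHom.snd T.M Q'.M).comp (pbM α g).subtype
  f2 := (MonoidHom.snd T.G Q'.G).comp (pbG α g).subtype
  comm_d := fun _ => rfl
  equiv := fun _ _ => rfl

end Pullback
section PullbackMaps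

variable {N T Q Q' : XMod}

/-- The induced morphism from the kernel `N` into the pullback `T ×_Q Q'`. -/
def pbIn (κ : XModHom N T) (α : XModHom T Q) (g : XModHom Q' Q)
    (h : XModHom.comp α κ = XModHom.triv N Q) : XModHom N (pbXMod α g) where
  f1 :=
    { toFun := fun n => ⟨(κ.f1 n, 1), by
        show α.f1 (κ.f1 n) = g.f1 1
        have := congrArg XModHom.f1 h
        have h' : α.f1 (κ.f1 n) = 1 := DFunLike.congr_fun this n
        rw [h', map_one]⟩
      map_one' := by
        apply Subtype.ext
        apply Prod.ext <;> simp <;> first | rfl | exact map_one _ | exact (map_one f.f1).trans rfl | exact (map_one f.f2).trans rfl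
      map_mul' := by
        intro a b
        apply Subtype.ext
        show (κ.f1 (a * b), (1 : Q'.M)) = (κ.f1 a, (1 : Q'.M)) * (κ.f1 b, (1 : Q'.M))
        simp [Prod.ext_iff, map_mul] }
  f2 :=
    { toFun := fun n => ⟨(κ.f2 n, 1), by
        show α.f2 (κ.f2 n) = g.f2 1
        have := congrArg XModHom.f2 h
        have h' : α.f2 (κ.f2 n) = 1 := DFunLike.congr_fun this n
        rw [h', map_one]⟩
      map_one' := by
        apply Subtype.ext
        apply Prod.ext <;> simp <;> first | rfl | exact map_one _ | exact (map_one f.f1).trans rfl | exact (map_one f.f2).trans rfl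
      map_mul' := by
        intro a b
        apply Subtype.ext
        show (κ.f2 (a * b), (1 : Q'.G)) = (κ.f2 a, (1 : Q'.G)) * (κ.f2 b, (1 : Q'.G))
        simp [Prod.ext_iff, map_mul] }
  comm_d := by
    intro n
    apply Subtype.ext
    apply Prod.ext
    · exact κ.comm_d n
    · show Q'.d (1 : Q'.M) = 1
      simp
  equiv := by
    intro b n
    apply Subtype.ext
    apply Prod.ext
    · exact κ.equiv b n
    · show (1 : Q'.M) = Q'.act 1 1
      simp

/-- The induced morphism into the pullback `T ×_Q Q'` from an object mapping
trivially to `Q` through the second leg. -/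
def pbInR (α : XModHom T Q) (g : XModHom Q' Q) {X : XMod} (u : XModHom X Q')
    (h : XModHom.comp g u = XModHom.triv X Q) : XModHom X (pbXMod α g) where
  f1 :=
    { toFun := fun n => ⟨(1, u.f1 n), by
        show α.f1 1 = g.f1 (u.f1 n)
        have := congrArg XModHom.f1 h
        have h' : g.f1 (u.f1 n) = 1 := DFunLike.congr_fun this n
        rw [h', map_one]⟩
      map_one' := by
        apply Subtype.ext
        apply Prod.ext <;> simp <;> first | rfl | exact map_one _ | exact (map_one f.f1).trans rfl | exact (map_one f.f2).trans rfl
      map_mul' := by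
        intro a b
        apply Subtype.ext
        show ((1 : T.M), u.f1 (a * b)) = ((1 : T.M), u.f1 a) * ((1 : T.M), u.f1 b)
        simp [Prod.ext_iff, map_mul] }
  f2 :=
    { toFun := fun n => ⟨(1, u.f2 n), by
        show α.f2 1 = g.f2 (u.f2 n)
        have := congrArg XModHom.f2 h
        have h' : g.f2 (u.f2 n) = 1 := DFunLike.congr_fun this n
        rw [h', map_one]⟩
      map_one' := by
        apply Subtype.ext
        apply Prod.ext <;> simp <;> first | rfl | exact map_one _ | exact (map_one f.f1).trans rfl | exact (map_one f.f2).trans rfl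
      map_mul' := by
        intro a b
        apply Subtype.ext
        show ((1 : T.G), u.f2 (a * b)) = ((1 : T.G), u.f2 a) * ((1 : T.G), u.f2 b)
        simp [Prod.ext_iff, map_mul] }
  comm_d := by
    intro n
    apply Subtype.ext
    apply Prod.ext
    · show T.d (1 : T.M) = 1
      simp
    · exact u.comm_d n
  equiv := by
    intro b n
    apply Subtype.ext
    apply Prod.ext
    · show (1 : T.M) = T.act 1 1
      simp
    · exact u.equiv b n

/-- The morphism of pullbacks `T ×_Q Q' → E ×_Q Q'` induced by `f : T → E`
with `p ∘ f = α`. -/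
def pbMapL {E : XMod} (α : XModHom T Q) (p : XModHom E Q) (g : XModHom Q' Q)
    (f : XModHom T E) (hpf : XModHom.comp p f = α) :
    XModHom (pbXMod α g) (pbXMod p g) where
  f1 :=
    { toFun := fun w => ⟨(f.f1 w.1.1, w.1.2), by
        show p.f1 (f.f1 w.1.1) = g.f1 w.1.2
        have h' : p.f1 (f.f1 w.1.1) = α.f1 w.1.1 :=
          DFunLike.congr_fun (congrArg XModHom.f1 hpf) w.1.1
        rw [h']
        exact w.2⟩
      map_one' := by
        apply Subtype.ext
        apply Prod.ext <;> simp <;> first | rfl | exact map_one _ | exact (map_one f.f1).trans rfl | exact (map_one f.f2).trans rfl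
      map_mul' := by
        intro a b
        apply Subtype.ext
        apply Prod.ext
        · exact map_mul f.f1 a.1.1 b.1.1
        · rfl }
  f2 :=
    { toFun := fun w => ⟨(f.f2 w.1.1, w.1.2), by
        show p.f2 (f.f2 w.1.1) = g.f2 w.1.2
        have h' : p.f2 (f.f2 w.1.1) = α.f2 w.1.1 :=
          DFunLike.congr_fun (congrArg XModHom.f2 hpf) w.1.1
        rw [h']
        exact w.2⟩
      map_one' := by
        apply Subtype.ext
        apply Prod.ext <;> simp <;> first | rfl | exact map_one _ | exact (map_one f.f1).trans rfl | exact (map_one f.f2).trans rfl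
      map_mul' := by
        intro a b
        apply Subtype.ext
        apply Prod.ext
        · exact map_mul f.f2 a.1.1 b.1.1
        · rfl }
  comm_d := by
    intro w
    apply Subtype.ext
    apply Prod.ext
    · exact f.comm_d _
    · rfl
  equiv := by
    intro b w
    apply Subtype.ext
    apply Prod.ext
    · exact f.equiv _ _
    · rfl

end PullbackMaps

/-- A commuting square is a pullback square (categorical definition). -/
def IsPullbackSquare {P X Y Z : XMod} (p1 : XModHom P X) (p2 : XModHom P Y)
    (f : XModHom X Z) (h : XModHom Y Z) : Prop :=
  XModHom.comp f p1 = XModHom.comp h p2 ∧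
    ∀ (W : XMod) (u : XModHom W X) (v : XModHom W Y),
      XModHom.comp f u = XModHom.comp h v →
        ∃! w : XModHom W P, XModHom.comp p1 w = u ∧ XModHom.comp p2 w = v

namespace LocalizationFunctor

/-- `L` is admissible for the class of regular epimorphisms: applying `L` to the
pullback of a regular epimorphism `α : LT → LQ` along the coaugmentation
`ℓ^Q : Q → LQ` yields again a pullback square. -/
def Admissible (L : LocalizationFunctor) : Prop :=
  ∀ (T Q : XMod) (α : XModHom (L.obj T) (L.obj Q)), XModHom.RegEpi α →
    IsPullbackSquare (L.map (pbFst α (L.ell Q))) (L.map (pbSnd α (L.ell Q)))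
      (L.map α) (L.map (L.ell Q))

/-- `L` is conditionally flat: the pullback of any `L`-flat short exact sequence
along any morphism is again `L`-flat. -/
def ConditionallyFlat (L : LocalizationFunctor) : Prop :=
  ∀ (N T Q : XMod) (κ : XModHom N T) (α : XModHom T Q) (hse : ShortExact κ α),
    L.LFlat κ α →
      ∀ (Q' : XMod) (g : XModHom Q' Q),
        L.LFlat (pbIn κ α g hse.1.1) (pbSnd α g)

/-- A short exact sequence `1 → N → T → Q → 1` admits a fiberwise localization:
there is a short exact sequence `1 → LN → E → Q → 1` together with an
`L`-equivalence `T → E` compatible with the coaugmentation of `N`. -/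
def AdmitsFiberwise (L : LocalizationFunctor) {N T Q : XMod} (κ : XModHom N T)
    (α : XModHom T Q) : Prop :=
  ∃ (E : XMod) (j : XModHom (L.obj N) E) (p : XModHom E Q) (e : XModHom T E),
    ShortExact j p ∧ XModHom.IsIso (L.map e) ∧
      XModHom.comp e κ = XModHom.comp j (L.ell N) ∧ XModHom.comp p e = α

end LocalizationFunctor
section Kernel

variable {N T : XMod} (f : XModHom N T)

theorem ker_act_mem {b : N.G} (hb : b ∈ f.f2.ker) {n : N.M} (hn : n ∈ f.f1.ker) :
    N.act b n ∈ f.f1.ker := by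
  have hb' : f.f2 b = 1 := hb
  have hn' : f.f1 n = 1 := hn
  show f.f1 (N.act b n) = 1
  rw [f.equiv, hb', hn', map_one]

/-- The automorphism of `ker f.f1` induced by an element of `ker f.f2`. -/
def kerActEquiv (b : ↥f.f2.ker) : ↥f.f1.ker ≃* ↥f.f1.ker where
  toFun n := ⟨N.act b.1 n.1, ker_act_mem f b.2 n.2⟩
  invFun n := ⟨N.act b.1⁻¹ n.1, ker_act_mem f (f.f2.ker.inv_mem b.2) n.2⟩
  left_inv n := Subtype.ext (N.act_inv_act _ _)
  right_inv n := Subtype.ext (N.act_act_inv _ _)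
  map_mul' n m := Subtype.ext (map_mul _ _ _)

/-- The kernel of a morphism of crossed modules, computed componentwise. -/
def kerXMod : XMod where
  M := ↥f.f1.ker
  G := ↥f.f2.ker
  act :=
    { toFun := kerActEquiv f
      map_one' := by
        apply MulEquiv.ext
        intro n
        apply Subtype.ext
        show N.act (1 : ↥f.f2.ker).1 n.1 = n.1
        simp
      map_mul' := by
        intro b c
        apply MulEquiv.ext
        intro n
        apply Subtype.ext
        show N.act (b * c).1 n.1 = N.act b.1 (N.act c.1 n.1)
        simp [map_mul] }
  d :=
    { toFun := fun n => ⟨N.d n.1, by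
        have hn : f.f1 n.1 = 1 := n.2
        show f.f2 (N.d n.1) = 1
        rw [← f.comm_d, hn, map_one]⟩
      map_one' := by
        apply Subtype.ext
        simp
      map_mul' := by
        intro a b
        apply Subtype.ext
        show N.d (a * b).1 = N.d a.1 * N.d b.1
        simp }
  act_d := by
    intro b n
    apply Subtype.ext
    exact N.act_d _ _
  peiffer := by
    intro n m
    apply Subtype.ext
    exact N.peiffer _ _

/-- The inclusion of the kernel. -/
def kerIncl : XModHom (kerXMod f) N where
  f1 := f.f1.ker.subtype
  f2 := f.f2.ker.subtype
  comm_d := fun _ => rfl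
  equiv := fun _ _ => rfl

end Kernel

/-- A crossed module is trivial if both underlying groups are trivial. -/
def XMod.IsTrivial (X : XMod) : Prop :=
  (∀ m : X.M, m = 1) ∧ ∀ b : X.G, b = 1

/-- `X` is `A`-null if the only morphism of crossed modules `A → X` is the
trivial one. -/
def ANull (A X : XMod) : Prop :=
  ∀ φ : XModHom A X, φ = XModHom.triv A X

/-- `X` is `f`-local if precomposition with `f` is a bijection on morphisms
into `X`. -/
def FLocal {B C : XMod} (f : XModHom B C) (X : XMod) : Prop :=
  Function.Bijective fun φ : XModHom C X => XModHom.comp φ f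

/-- The subgroup `[N₂, N₁]` of `N₁` generated by the elements `ᵇt·t⁻¹`. -/
def actCommutator (N : XMod) : Subgroup N.M :=
  Subgroup.closure {x | ∃ (b : N.G) (t : N.M), x = N.act b t * t⁻¹}

section NormalClosure

variable {A W : XMod} (φ : XModHom A W)

/-- The level-2 part of the normal closure of the image of `φ`:
the normal closure of `φ₂(A₂)` in `W₂`. -/
def ncl2 : Subgroup W.G :=
  Subgroup.normalClosure (Set.range φ.f2)

/-- The level-1 part of the normal closure of the image of `φ`:
the subgroup `φ₁(A₁)^{W₂}·[φ₂(A₂)^{W₂}, W₁]` of `W₁`. -/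
def ncl1 : Subgroup W.M :=
  Subgroup.closure
    ({x | ∃ (b : W.G) (m : A.M), x = W.act b (φ.f1 m)} ∪
      {x | ∃ s ∈ ncl2 φ, ∃ w : W.M, x = W.act s w * w⁻¹})

end NormalClosure

/-! The second projection `W = X ×_Y Q → Q` is a regular epimorphism, being a pullback of `h`,
and it carries `ψ` to `ev`; since the normal closure of an image is built from images, conjugates
and `ˢw·w⁻¹`, it maps `K_W` onto `K_Q`. The first projection kills `ψ`, so `K_W` lies in its
kernel, on which the second projection is injective. -/

namespace Subgroup

variable {G H₁ H₂ : Type*} [Group G] [Group H₁] [Group H₂] {f₁ : G →* H₁} {f₂ : G →* H₂}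
  {K : Subgroup G}

theorem mem_iff_of_le_ker_of_ker_inf_ker_eq_bot (hK : K ≤ f₁.ker)
    (hf : f₁.ker ⊓ f₂.ker = ⊥) (g : G) : g ∈ K ↔ f₁ g = 1 ∧ f₂ g ∈ K.map f₂ := by
  refine ⟨fun hg => ⟨hK hg, mem_map_of_mem f₂ hg⟩, ?_⟩
  rintro ⟨hg, k, hk, hkg⟩
  have hquot : k⁻¹ * g ∈ f₁.ker ⊓ f₂.ker :=
    ⟨by simp [hg, MonoidHom.mem_ker.1 (hK hk)], by simp [hkg]⟩
  rw [hf, mem_bot, inv_mul_eq_one] at hquot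
  exact hquot ▸ hk

theorem injective_domRestrict_of_le_ker_of_ker_inf_ker_eq_bot (hK : K ≤ f₁.ker)
    (hf : f₁.ker ⊓ f₂.ker = ⊥) : Function.Injective (f₂.domRestrict K) := by
  rw [← MonoidHom.ker_eq_bot_iff, eq_bot_iff]
  intro k hk
  have hk' : (k : G) ∈ f₁.ker ⊓ f₂.ker := ⟨hK k.2, hk⟩
  rw [hf, mem_bot] at hk'
  exact Subtype.ext hk'

theorem nonempty_mulEquiv_map_of_le_ker_of_ker_inf_ker_eq_bot (hK : K ≤ f₁.ker)
    (hf : f₁.ker ⊓ f₂.ker = ⊥) : Nonempty (K ≃* K.map f₂) :=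
  ⟨(MonoidHom.ofInjective (injective_domRestrict_of_le_ker_of_ker_inf_ker_eq_bot hK hf)).trans
    (MulEquiv.subgroupCongr (f₂.domRestrict_range K))⟩

end Subgroup

section NormalClosure

variable {A W Z : XMod} (φ : XModHom A W)

theorem ncl2_le_ker_of_comp_eq_triv {f : XModHom W Z} (hf : XModHom.comp f φ = XModHom.triv A Z) :
    ncl2 φ ≤ f.f2.ker :=
  Subgroup.normalClosure_le_normal <| by
    rintro _ ⟨a, rfl⟩
    exact DFunLike.congr_fun (congrArg XModHom.f2 hf) a

theorem ncl1_le_ker_of_comp_eq_triv {f : XModHom W Z} (hf : XModHom.comp f φ = XModHom.triv A Z) :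
    ncl1 φ ≤ f.f1.ker := by
  rw [ncl1, Subgroup.closure_le]
  rintro _ (⟨b, m, rfl⟩ | ⟨s, hs, w, rfl⟩)
  · have hm : f.f1 (φ.f1 m) = 1 := DFunLike.congr_fun (congrArg XModHom.f1 hf) m
    simp [MonoidHom.mem_ker, f.equiv, hm]
  · have hs' : f.f2 s = 1 := ncl2_le_ker_of_comp_eq_triv φ hf hs
    simp [MonoidHom.mem_ker, f.equiv, hs']

theorem map_ncl2_of_surjective (f : XModHom W Z) (hf : Function.Surjective f.f2) :
    (ncl2 φ).map f.f2 = ncl2 (XModHom.comp f φ) := by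
  rw [ncl2, Subgroup.map_normalClosure _ _ hf, ← Set.range_comp]
  rfl

theorem map_ncl1_of_regEpi (f : XModHom W Z) (hf : XModHom.RegEpi f) :
    (ncl1 φ).map f.f1 = ncl1 (XModHom.comp f φ) := by
  have hncl2 := map_ncl2_of_surjective φ f hf.2
  rw [ncl1, ncl1, MonoidHom.map_closure, Set.image_union]
  congr 2
  · ext x
    constructor
    · rintro ⟨_, ⟨b, m, rfl⟩, rfl⟩
      exact ⟨f.f2 b, m, f.equiv b (φ.f1 m)⟩
    · rintro ⟨b, m, rfl⟩
      obtain ⟨b, rfl⟩ := hf.2 b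
      exact ⟨_, ⟨b, m, rfl⟩, f.equiv b (φ.f1 m)⟩
  · ext x
    constructor
    · rintro ⟨_, ⟨s, hs, w, rfl⟩, rfl⟩
      refine ⟨f.f2 s, hncl2 ▸ Subgroup.mem_map_of_mem f.f2 hs, f.f1 w, ?_⟩
      rw [map_mul, map_inv, f.equiv]
    · rintro ⟨s, hs, w, rfl⟩
      obtain ⟨s', hs', rfl⟩ := hncl2 ▸ hs
      obtain ⟨w, rfl⟩ := hf.1 w
      exact ⟨_, ⟨s', hs', w, rfl⟩, by rw [map_mul, map_inv, f.equiv]⟩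

end NormalClosure

section Pullback

variable {T Q Q' : XMod} (α : XModHom T Q) (g : XModHom Q' Q)

theorem pbSnd_regEpi (hα : XModHom.RegEpi α) : XModHom.RegEpi (pbSnd α g) := by
  constructor
  · intro q
    obtain ⟨t, ht⟩ := hα.1 (g.f1 q)
    exact ⟨⟨(t, q), ht⟩, rfl⟩
  · intro q
    obtain ⟨t, ht⟩ := hα.2 (g.f2 q)
    exact ⟨⟨(t, q), ht⟩, rfl⟩

theorem ker_pbFst_f1_inf_ker_pbSnd_f1 : (pbFst α g).f1.ker ⊓ (pbSnd α g).f1.ker = ⊥ :=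
  eq_bot_iff.2 fun _ ⟨h₁, h₂⟩ => Subtype.ext (Prod.ext h₁ h₂)

theorem ker_pbFst_f2_inf_ker_pbSnd_f2 : (pbFst α g).f2.ker ⊓ (pbSnd α g).f2.ker = ⊥ :=
  eq_bot_iff.2 fun _ ⟨h₁, h₂⟩ => Subtype.ext (Prod.ext h₁ h₂)

variable {A : XMod} (u : XModHom A Q') (hu : XModHom.comp g u = XModHom.triv A Q)

theorem pbFst_comp_pbInR : XModHom.comp (pbFst α g) (pbInR α g u hu) = XModHom.triv A T :=
  XModHom.ext (MonoidHom.ext fun _ => rfl) (MonoidHom.ext fun _ => rfl)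

theorem pbSnd_comp_pbInR : XModHom.comp (pbSnd α g) (pbInR α g u hu) = u :=
  XModHom.ext (MonoidHom.ext fun _ => rfl) (MonoidHom.ext fun _ => rfl)

end Pullback

/-- Let `h : X → Y` be a regular epimorphism of crossed
modules, `p : Q → Y` a morphism, and `W = X ×_Y Q` the componentwise pullback.
Given `ev : A → Q` with `p ∘ ev` trivial, let `ψ : A → W` be the induced
morphism with components `m ↦ (1, ev m)`.  Then the normal closure `K_W` of the
image of `ψ` in `W` equals `{1} × K_Q` (where `K_Q` is the normal closure of
the image of `ev` in `Q`); in particular `K_W` and `K_Q` are isomorphic. -/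
theorem normal_closure_of_pullback_evaluation (X Y Q A : XMod)
    (h : XModHom X Y) (hreg : XModHom.RegEpi h) (p : XModHom Q Y)
    (ev : XModHom A Q) (hev : XModHom.comp p ev = XModHom.triv A Y) :
    (∀ w : ↥(pbM h p),
      w ∈ ncl1 (pbInR h p ev hev) ↔ (w.1.1 = 1 ∧ w.1.2 ∈ ncl1 ev)) ∧
    (∀ b : ↥(pbG h p),
      b ∈ ncl2 (pbInR h p ev hev) ↔ (b.1.1 = 1 ∧ b.1.2 ∈ ncl2 ev)) ∧
    Nonempty (↥(ncl1 (pbInR h p ev hev)) ≃* ↥(ncl1 ev)) ∧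
    Nonempty (↥(ncl2 (pbInR h p ev hev)) ≃* ↥(ncl2 ev)) := by
  set ψ := pbInR h p ev hev
  have hmap1 : (ncl1 ψ).map (pbSnd h p).f1 = ncl1 ev := by
    rw [map_ncl1_of_regEpi ψ _ (pbSnd_regEpi h p hreg), pbSnd_comp_pbInR]
  have hmap2 : (ncl2 ψ).map (pbSnd h p).f2 = ncl2 ev := by
    rw [map_ncl2_of_surjective ψ _ (pbSnd_regEpi h p hreg).2, pbSnd_comp_pbInR]
  have hle1 := ncl1_le_ker_of_comp_eq_triv ψ (pbFst_comp_pbInR h p ev hev)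
  have hle2 := ncl2_le_ker_of_comp_eq_triv ψ (pbFst_comp_pbInR h p ev hev)
  have hker1 := ker_pbFst_f1_inf_ker_pbSnd_f1 h p
  have hker2 := ker_pbFst_f2_inf_ker_pbSnd_f2 h p
  refine ⟨fun w => ?_, fun b => ?_, ?_, ?_⟩
  · rw [← hmap1]
    exact Subgroup.mem_iff_of_le_ker_of_ker_inf_ker_eq_bot hle1 hker1 w
  · rw [← hmap2]
    exact Subgroup.mem_iff_of_le_ker_of_ker_inf_ker_eq_bot hle2 hker2 b
  · exact hmap1 ▸ Subgroup.nonempty_mulEquiv_map_of_le_ker_of_ker_inf_ker_eq_bot hle1 hker1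
  · exact hmap2 ▸ Subgroup.nonempty_mulEquiv_map_of_le_ker_of_ker_inf_ker_eq_bot hle2 hker2
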